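/- arXiv:2503.13677 — 2 statements merged into one kernel-verified Lean document; each statement's English description precedes it below -/
import Mathlib

section
/- Validity of the second tightening inequality (A.2): Let 0 ≤ P_min ≤ P_max, R ≥ 0, R̄ ≥ 0 be real parameters. Let u₀, u₁ ∈ {0,1}, y ∈ ℝ with 0 ≤ y, y ≥ u₁ − u₀, y ≤ u₁, y ≤ 1 − u₀, and let p₀, p₁ ∈ ℝ satisfy P_min·u_s ≤ p_s ≤ P_max·u_s for s ∈ {0,1}, p₁ − p₀ ≤ R·u₀ + R̄·(1 − u₀), and p₀ − p₁ ≤ R·u₁ + R̄·(1 − u₁). Then p₁ ≤ P_max·u₁ − (P_max − R̄)·y. -/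
/-! On binary commitments the startup constraints pin the indicator down to `y = u₁ (1 - u₀)`.
The bound then reads `p₁ ≤ 0` while the unit is off, `p₁ ≤ P_max` while it stays on, and
`p₁ ≤ R̄` at a startup, where it follows from `p₀ = 0` and the ramp-up limit. -/

theorem startup_eq_mul_of_binary {u0 u1 y : ℝ} (hu0 : u0 = 0 ∨ u0 = 1) (hu1 : u1 = 0 ∨ u1 = 1)
    (hy_nonneg : 0 ≤ y) (hy_trans : u1 - u0 ≤ y) (hy_up : y ≤ u1) (hy_down : y ≤ 1 - u0) :
    y = u1 * (1 - u0) := by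
  rcases hu0 with rfl | rfl <;> rcases hu1 with rfl | rfl <;> linarith

theorem tightening_A2_general
    (Pmax R Rb u0 u1 y p0 p1 : ℝ)
    (hu0 : u0 = 0 ∨ u0 = 1) (hu1 : u1 = 0 ∨ u1 = 1)
    (hy_nonneg : 0 ≤ y) (hy_trans : u1 - u0 ≤ y)
    (hy_up : y ≤ u1) (hy_down : y ≤ 1 - u0)
    (hp0_ub : p0 ≤ Pmax * u0)
    (hp1_ub : p1 ≤ Pmax * u1)
    (hramp_up : p1 - p0 ≤ R * u0 + Rb * (1 - u0)) :
    p1 ≤ Pmax * u1 - (Pmax - Rb) * y := by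
  obtain rfl := startup_eq_mul_of_binary hu0 hu1 hy_nonneg hy_trans hy_up hy_down
  rcases hu0 with rfl | rfl <;> rcases hu1 with rfl | rfl <;> linarith

/-- validity of tightening inequality (A.2). -/
theorem tightening_A2
    (Pmin Pmax R Rb u0 u1 y p0 p1 : ℝ)
    (hPmin : 0 ≤ Pmin) (hPP : Pmin ≤ Pmax) (hR : 0 ≤ R) (hRb : 0 ≤ Rb)
    (hu0 : u0 = 0 ∨ u0 = 1) (hu1 : u1 = 0 ∨ u1 = 1)
    (hy_nonneg : 0 ≤ y) (hy_trans : u1 - u0 ≤ y)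
    (hy_up : y ≤ u1) (hy_down : y ≤ 1 - u0)
    (hp0_lb : Pmin * u0 ≤ p0) (hp0_ub : p0 ≤ Pmax * u0)
    (hp1_lb : Pmin * u1 ≤ p1) (hp1_ub : p1 ≤ Pmax * u1)
    (hramp_up : p1 - p0 ≤ R * u0 + Rb * (1 - u0))
    (hramp_dn : p0 - p1 ≤ R * u1 + Rb * (1 - u1)) :
    p1 ≤ Pmax * u1 - (Pmax - Rb) * y :=
  tightening_A2_general Pmax R Rb u0 u1 y p0 p1 hu0 hu1 hy_nonneg hy_trans hy_up hy_down hp0_ub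
    hp1_ub hramp_up
end

section
/- The tightened two-period polytope contains the convex hull of the binary unit-commitment feasible set: Let 0 ≤ P_min ≤ P_max, R ≥ 0, R̄ ≥ 0. Define S ⊆ ℝ⁵ as the set of (p₀, p₁, u₀, u₁, y) with u₀, u₁ ∈ {0,1}, 0 ≤ y, y ≥ u₁ − u₀, y ≤ u₁, y ≤ 1 − u₀, P_min·u_s ≤ p_s ≤ P_max·u_s for s ∈ {0,1}, p₁ − p₀ ≤ R·u₀ + R̄·(1 − u₀), and p₀ − p₁ ≤ R·u₁ + R̄·(1 − u₁). Define P ⊆ ℝ⁵ by the same linear constraints with the binary requirements relaxed to 0 ≤ u₀ ≤ 1 and 0 ≤ u₁ ≤ 1, together with the four additional inequalities p₀ ≤ R̄·u₀ + (P_max − R̄)·(u₁ − y), p₁ ≤ P_max·u₁ − (P_max − R̄)·y, p₁ − p₀ ≤ (P_min + R)·u₁ − P_min·u₀ − (P_min + R − R̄)·y, and p₀ − p₁ ≤ R̄·u₀ − (R̄ − R)·u₁ − (P_min + R − R̄)·y. Then the convex hull (over ℝ) of S is contained in P. -/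
/-- The common linear constraints (state transition, output limits, ramping)
for a single generator over two consecutive periods, for the point
`(p₀, p₁, u₀, u₁, y)`. -/
def ucLinConstraints (Pmin Pmax R Rb p0 p1 u0 u1 y : ℝ) : Prop :=
  0 ≤ y ∧ u1 - u0 ≤ y ∧ y ≤ u1 ∧ y ≤ 1 - u0 ∧
  Pmin * u0 ≤ p0 ∧ p0 ≤ Pmax * u0 ∧
  Pmin * u1 ≤ p1 ∧ p1 ≤ Pmax * u1 ∧
  p1 - p0 ≤ R * u0 + Rb * (1 - u0) ∧
  p0 - p1 ≤ R * u1 + Rb * (1 - u1)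

/-- The binary two-period unit-commitment feasible set `S ⊆ ℝ⁵`,
with coordinates `(p₀, p₁, u₀, u₁, y)`. -/
def ucBinarySet (Pmin Pmax R Rb : ℝ) : Set (ℝ × ℝ × ℝ × ℝ × ℝ) :=
  {v | (v.2.2.1 = 0 ∨ v.2.2.1 = 1) ∧ (v.2.2.2.1 = 0 ∨ v.2.2.2.1 = 1) ∧
    ucLinConstraints Pmin Pmax R Rb v.1 v.2.1 v.2.2.1 v.2.2.2.1 v.2.2.2.2}

/-- The tightened relaxed polytope `P ⊆ ℝ⁵`: the binary requirements are
relaxed to `[0,1]` and the four valid inequalities (A.1)–(A.4) are added. -/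
def ucTightenedPolytope (Pmin Pmax R Rb : ℝ) : Set (ℝ × ℝ × ℝ × ℝ × ℝ) :=
  {v | (0 ≤ v.2.2.1 ∧ v.2.2.1 ≤ 1) ∧ (0 ≤ v.2.2.2.1 ∧ v.2.2.2.1 ≤ 1) ∧
    ucLinConstraints Pmin Pmax R Rb v.1 v.2.1 v.2.2.1 v.2.2.2.1 v.2.2.2.2 ∧
    v.1 ≤ Rb * v.2.2.1 + (Pmax - Rb) * (v.2.2.2.1 - v.2.2.2.2) ∧
    v.2.1 ≤ Pmax * v.2.2.2.1 - (Pmax - Rb) * v.2.2.2.2 ∧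
    v.2.1 - v.1 ≤ (Pmin + R) * v.2.2.2.1 - Pmin * v.2.2.1
      - (Pmin + R - Rb) * v.2.2.2.2 ∧
    v.1 - v.2.1 ≤ Rb * v.2.2.1 - (Rb - R) * v.2.2.2.1
      - (Pmin + R - Rb) * v.2.2.2.2}

/-! The tightened polytope is an intersection of half-spaces, hence convex, so it suffices that
every binary point satisfies the commitment bounds and (A.1)–(A.4). For binary commitments the
startup indicator is forced to be `u₁ (1 - u₀)`, and in each of the four commitment patterns the
valid inequalities then reduce to output and ramping limits. -/

theorem convex_setOf_le_of_affine {E : Type*} [AddCommGroup E] [Module ℝ E] {f g : E → ℝ}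
    (hfg : ∀ x y (a : ℝ), g (a • x + (1 - a) • y) - f (a • x + (1 - a) • y) =
      a * (g x - f x) + (1 - a) * (g y - f y)) :
    Convex ℝ {x | f x ≤ g x} := by
  intro x hx y hy a b ha hb hab
  obtain rfl : b = 1 - a := by linarith
  rw [Set.mem_ofPred_eq, ← sub_nonneg] at hx hy ⊢
  rw [hfg]
  exact add_nonneg (mul_nonneg ha hx) (mul_nonneg hb hy)

theorem convex_ucTightenedPolytope (Pmin Pmax R Rb : ℝ) :
    Convex ℝ (ucTightenedPolytope Pmin Pmax R Rb) := by
  simp only [ucTightenedPolytope, ucLinConstraints, Set.ofPred_and]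
  repeat' apply Convex.inter
  all_goals
    apply convex_setOf_le_of_affine
    intro x y a
    simp only [Prod.fst_add, Prod.snd_add, Prod.smul_fst, Prod.smul_snd, smul_eq_mul]
    ring

theorem startup_eq_of_binary {u0 u1 y : ℝ} (hu0 : u0 = 0 ∨ u0 = 1) (hu1 : u1 = 0 ∨ u1 = 1)
    (h₁ : 0 ≤ y) (h₂ : u1 - u0 ≤ y) (h₃ : y ≤ u1) (h₄ : y ≤ 1 - u0) :
    y = u1 * (1 - u0) := by
  rcases hu0 with rfl | rfl <;> rcases hu1 with rfl | rfl <;> linarith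

theorem ucBinarySet_subset_ucTightenedPolytope (Pmin Pmax R Rb : ℝ) :
    ucBinarySet Pmin Pmax R Rb ⊆ ucTightenedPolytope Pmin Pmax R Rb := by
  rintro ⟨p0, p1, u0, u1, y⟩ ⟨hu0, hu1, hlin⟩
  dsimp only at hu0 hu1 hlin
  refine ⟨?_, ?_, hlin, ?_⟩
  · rcases hu0 with rfl | rfl <;> norm_num
  · rcases hu1 with rfl | rfl <;> norm_num
  obtain ⟨h₁, h₂, h₃, h₄, h₅, h₆, h₇, h₈, h₉, h₁₀⟩ := hlin
  obtain rfl := startup_eq_of_binary hu0 hu1 h₁ h₂ h₃ h₄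
  dsimp only
  rcases hu0 with rfl | rfl <;> rcases hu1 with rfl | rfl <;>
    refine ⟨?_, ?_, ?_, ?_⟩ <;> linarith

theorem convexHull_ucBinarySet_subset_tightened_general
    (Pmin Pmax R Rb : ℝ) :
    convexHull ℝ (ucBinarySet Pmin Pmax R Rb) ⊆
      ucTightenedPolytope Pmin Pmax R Rb :=
  convexHull_min (ucBinarySet_subset_ucTightenedPolytope Pmin Pmax R Rb)
    (convex_ucTightenedPolytope Pmin Pmax R Rb)

/-- the tightened two-period polytope contains the convex hull
of the binary unit-commitment feasible set. -/
theorem convexHull_ucBinarySet_subset_tightened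
    (Pmin Pmax R Rb : ℝ)
    (hPmin : 0 ≤ Pmin) (hPP : Pmin ≤ Pmax) (hR : 0 ≤ R) (hRb : 0 ≤ Rb) :
    convexHull ℝ (ucBinarySet Pmin Pmax R Rb) ⊆
      ucTightenedPolytope Pmin Pmax R Rb :=
  convexHull_ucBinarySet_subset_tightened_general Pmin Pmax R Rb
end
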